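/- arXiv:2003.11311 — 3 statements merged into one kernel-verified Lean document; each statement's English description precedes it below -/
import Mathlib

section
/- For every finitely additive complex set function μ : 𝔜 → ℂ, the total variation satisfies |μ|(Ω) = sup_{n≥1} S_n, where S_n := Σ_{p an n-node} |μ(Cyl(p))|. -/
open MeasureTheory Filter Finset

attribute [local instance] Classical.propDecidable

noncomputable section

/-- A relation on ℕ representing a naturally labelled past-finite causal set:
a strict partial order `r` with `r i j → i < j`. -/
def CausalRel (r : ℕ → ℕ → Prop) : Prop :=
  (∀ i, ¬ r i i) ∧ (∀ i j k, r i j → r j k → r i k) ∧ (∀ i j, r i j → i < j)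

/-- Ω, the sample space of naturally labelled past-finite causal sets. -/
def Omega : Type := {r : ℕ → ℕ → Prop // CausalRel r}

/-- An `n`-node: a strict partial order on `Fin n` compatible with the labelling. -/
def IsNode {n : ℕ} (p : Fin n → Fin n → Prop) : Prop :=
  (∀ i, ¬ p i i) ∧ (∀ i j k, p i j → p j k → p i k) ∧
    (∀ i j : Fin n, p i j → (i : ℕ) < (j : ℕ))

/-- The cylinder set of an `n`-node. -/
def Cyl {n : ℕ} (p : Fin n → Fin n → Prop) : Set Omega :=
  {r | ∀ i j : Fin n, r.1 i.1 j.1 ↔ p i j}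

/-- The Boolean set algebra 𝔜 generated by the cylinder sets (and Ω itself) under
finite unions, intersections and complements. -/
inductive InAlg : Set Omega → Prop
  | basic {n : ℕ} (hn : 1 ≤ n) (p : Fin n → Fin n → Prop) (hp : IsNode p) : InAlg (Cyl p)
  | univ : InAlg Set.univ
  | compl (s : Set Omega) : InAlg s → InAlg sᶜ
  | union (s t : Set Omega) : InAlg s → InAlg t → InAlg (s ∪ t)

/-- Finite additivity of a complex set function on the algebra 𝔜. -/
def FinitelyAdditive (μ : Set Omega → ℂ) : Prop :=
  ∀ s t : Set Omega, InAlg s → InAlg t → Disjoint s t → μ (s ∪ t) = μ s + μ t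

/-- A finite partition of Ω into pairwise disjoint members of 𝔜. -/
def IsPartition (π : Finset (Set Omega)) : Prop :=
  (∀ s ∈ π, InAlg s) ∧ ((↑π : Set (Set Omega)).Pairwise Disjoint) ∧
    ⋃₀ (↑π : Set (Set Omega)) = Set.univ

/-- Bounded variation: the sums Σᵢ |μ(αᵢ)| over finite partitions of Ω into members
of 𝔜 are uniformly bounded. -/
def BoundedVariation (μ : Set Omega → ℂ) : Prop :=
  ∃ M : ℝ, ∀ π : Finset (Set Omega), IsPartition π → ∑ s ∈ π, ‖μ s‖ ≤ M

/-- λ(a,b) = Σ_{k=b}^{a} C(a−b, k−b)·t_k. -/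
def lam (t : ℕ → ℂ) (a b : ℕ) : ℂ :=
  ∑ k ∈ Finset.Icc b a, ((a - b).choose (k - b) : ℂ) * t k

/-- The maximal elements of a finite subset `I` with respect to the relation `c`. -/
def maxIn {n : ℕ} (c : Fin n → Fin n → Prop) (I : Finset (Fin n)) : Finset (Fin n) :=
  I.filter fun i => ∀ j ∈ I, ¬ c i j

/-- The past of the element `m` in the node `p`. -/
def pastOf {n : ℕ} (p : Fin n → Fin n → Prop) (m : Fin n) : Finset (Fin n) :=
  Finset.univ.filter fun i => p i m

/-- The ℂSG amplitude of (the cylinder set of) an `n`-node: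
∏_{m=1}^{n−1} λ(ϖ_m, μ_m)/λ(m,0). -/
def amp (t : ℕ → ℂ) {n : ℕ} (p : Fin n → Fin n → Prop) : ℂ :=
  ∏ m ∈ Finset.univ.filter (fun m : Fin n => 1 ≤ (m : ℕ)),
    lam t (pastOf p m).card (maxIn p (pastOf p m)).card / lam t (m : ℕ) 0

/-- μ is the ℂSG measure associated to the coupling constants t: it is finitely
additive on 𝔜 and takes the prescribed values on cylinder sets. -/
def IsCSG (t : ℕ → ℂ) (μ : Set Omega → ℂ) : Prop :=
  FinitelyAdditive μ ∧
    ∀ (n : ℕ), 1 ≤ n → ∀ p : Fin n → Fin n → Prop, IsNode p → μ (Cyl p) = amp t p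

/-- `I` is an order ideal (downward-closed set) of the relation `c`. -/
def isIdeal {n : ℕ} (c : Fin n → Fin n → Prop) (I : Finset (Fin n)) : Prop :=
  ∀ j ∈ I, ∀ i, c i j → i ∈ I

/-- Q(c) := Σ_{I an order ideal of c} |λ(|I|, m(I))|. -/
def Qval (t : ℕ → ℂ) {n : ℕ} (c : Fin n → Fin n → Prop) : ℝ :=
  ∑ I ∈ Finset.univ.filter (fun I : Finset (Fin n) => isIdeal c I),
    ‖lam t I.card (maxIn c I).card‖

/-- ζ(c) := Q(c)/|λ(n,0)| − 1. -/
def zeta (t : ℕ → ℂ) {n : ℕ} (c : Fin n → Fin n → Prop) : ℝ :=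
  Qval t c / ‖lam t n 0‖ - 1

/-- ζ_n^a := (Σ_{k=0}^{n} C(n,k)·|t_k|)/|λ(n,0)| − 1. -/
def zetaA (t : ℕ → ℂ) (n : ℕ) : ℝ :=
  (∑ k ∈ Finset.range (n + 1), (n.choose k : ℝ) * ‖t k‖) /
    ‖lam t n 0‖ - 1

/-- ζ_n^c := (|t_0| + Σ_{ϖ=1}^{n} |λ(ϖ,1)|)/|λ(n,0)| − 1. -/
def zetaC (t : ℕ → ℂ) (n : ℕ) : ℝ :=
  (‖t 0‖ + ∑ w ∈ Finset.Icc 1 n, ‖lam t w 1‖) /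
    ‖lam t n 0‖ - 1

/-- S_n := Σ_{p an n-node} |μ(Cyl(p))|. -/
def Svar (μ : Set Omega → ℂ) (n : ℕ) : ℝ :=
  ∑ p : {p : Fin n → Fin n → Prop // IsNode p}, ‖μ (Cyl p.1)‖

/-!
Every member of 𝔜 depends only on the restriction of a causal set to its first `n` elements,
for all large `n`, and is then the disjoint union of the cylinder sets of `n`-nodes it contains.
So for a partition `π` and `n` large, additivity and the triangle inequality bound
`Σ_{α ∈ π} |μ(α)|` by `S_n`, since each `n`-node cylinder lies in exactly one part; conversely
the `n`-node cylinders themselves form a partition of Ω whose sum is `S_n`.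
-/

namespace Omega

def restrict (n : ℕ) (r : Omega) : Fin n → Fin n → Prop := fun i j => r.1 i j

lemma isNode_restrict (n : ℕ) (r : Omega) : IsNode (r.restrict n) :=
  ⟨fun i => r.2.1 i, fun _ _ _ => r.2.2.1 _ _ _, fun _ _ => r.2.2.2 _ _⟩

lemma restrict_eq_of_le {m n : ℕ} (hmn : m ≤ n) {r r' : Omega}
    (h : r.restrict n = r'.restrict n) : r.restrict m = r'.restrict m :=
  funext₂ fun i j => congrFun₂ h (Fin.castLE hmn i) (Fin.castLE hmn j)

end Omega

lemma mem_cyl_iff {n : ℕ} {p : Fin n → Fin n → Prop} {r : Omega} :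
    r ∈ Cyl p ↔ r.restrict n = p := by
  simp only [Cyl, Set.mem_ofPred_eq, funext_iff, eq_iff_iff]
  rfl

lemma mem_cyl_restrict (n : ℕ) (r : Omega) : r ∈ Cyl (r.restrict n) := mem_cyl_iff.2 rfl

/-- The causal set that agrees with the node `p` on `Fin n` and has no other relations. -/
def IsNode.toOmega {n : ℕ} {p : Fin n → Fin n → Prop} (hp : IsNode p) : Omega :=
  ⟨fun i j => ∃ (hi : i < n) (hj : j < n), p ⟨i, hi⟩ ⟨j, hj⟩,
    fun _ ⟨_, _, h⟩ => hp.1 _ h,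
    fun _ _ _ ⟨hi, _, h₁⟩ ⟨_, hk, h₂⟩ => ⟨hi, hk, hp.2.1 _ _ _ h₁ h₂⟩,
    fun _ _ ⟨_, _, h⟩ => hp.2.2 _ _ h⟩

lemma IsNode.toOmega_mem_cyl {n : ℕ} {p : Fin n → Fin n → Prop} (hp : IsNode p) :
    hp.toOmega ∈ Cyl p :=
  fun i j => ⟨fun ⟨_, _, h⟩ => h, fun h => ⟨i.2, j.2, h⟩⟩

lemma cyl_disjoint {n : ℕ} {p q : Fin n → Fin n → Prop} (h : p ≠ q) :
    Disjoint (Cyl p) (Cyl q) :=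
  Set.disjoint_left.2 fun _ hp hq => h ((mem_cyl_iff.1 hp).symm.trans (mem_cyl_iff.1 hq))

lemma cyl_injective (n : ℕ) :
    Function.Injective fun p : {p : Fin n → Fin n → Prop // IsNode p} => Cyl p.1 := by
  intro p q (h : Cyl p.1 = Cyl q.1)
  have hq : p.2.toOmega ∈ Cyl q.1 := h ▸ p.2.toOmega_mem_cyl
  exact Subtype.ext ((mem_cyl_iff.1 p.2.toOmega_mem_cyl).symm.trans (mem_cyl_iff.1 hq))

def DependsOnFirst (n : ℕ) (s : Set Omega) : Prop :=
  ∀ r r' : Omega, r.restrict n = r'.restrict n → r ∈ s → r' ∈ s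

lemma DependsOnFirst.mono {m n : ℕ} {s : Set Omega} (hs : DependsOnFirst m s) (hmn : m ≤ n) :
    DependsOnFirst n s :=
  fun r r' h => hs r r' (Omega.restrict_eq_of_le hmn h)

lemma InAlg.eventually_dependsOnFirst {s : Set Omega} (hs : InAlg s) :
    ∀ᶠ n in atTop, DependsOnFirst n s := by
  induction hs with
  | @basic n _ p _ =>
    refine eventually_atTop.2 ⟨n, fun m hm => DependsOnFirst.mono ?_ hm⟩
    exact fun r r' h hr => mem_cyl_iff.2 (h ▸ mem_cyl_iff.1 hr)
  | univ => exact .of_forall fun _ _ _ _ _ => trivial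
  | compl s _ ih => exact ih.mono fun _ hs r r' h hr hr' => hr (hs r' r h.symm hr')
  | union s t _ _ ihs iht =>
    exact (ihs.and iht).mono fun _ ⟨hs, ht⟩ r r' h => Or.imp (hs r r' h) (ht r r' h)

def nodesIn (n : ℕ) (s : Set Omega) : Finset {p : Fin n → Fin n → Prop // IsNode p} :=
  univ.filter fun p => Cyl p.1 ⊆ s

lemma DependsOnFirst.eq_biUnion_cyl {n : ℕ} {s : Set Omega} (hs : DependsOnFirst n s) :
    s = ⋃ p ∈ nodesIn n s, Cyl p.1 := by
  refine Set.Subset.antisymm (fun r hr => Set.mem_biUnion (x := ⟨_, r.isNode_restrict n⟩)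
    ?_ (mem_cyl_restrict n r)) (Set.iUnion₂_subset fun p hp => (mem_filter.1 hp).2)
  exact mem_filter.2 ⟨mem_univ _, fun r' hr' => hs r r' (mem_cyl_iff.1 hr').symm hr⟩

lemma isSetRing_inAlg : IsSetRing {s : Set Omega | InAlg s} where
  empty_mem := by simpa using InAlg.compl _ InAlg.univ
  union_mem := InAlg.union
  sdiff_mem s t hs ht := by
    simpa [Set.sdiff_eq, Set.compl_union] using InAlg.compl _ (InAlg.union _ _ hs.compl ht)

lemma FinitelyAdditive.map_empty {μ : Set Omega → ℂ} (hμ : FinitelyAdditive μ) : μ ∅ = 0 := by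
  have h := hμ ∅ ∅ isSetRing_inAlg.empty_mem isSetRing_inAlg.empty_mem disjoint_bot_left
  rw [Set.union_self] at h
  simpa using h

def FinitelyAdditive.toAddContent {μ : Set Omega → ℂ} (hμ : FinitelyAdditive μ) :
    AddContent ℂ {s : Set Omega | InAlg s} :=
  isSetRing_inAlg.addContent_of_union μ hμ.map_empty fun hs ht => hμ _ _ hs ht

lemma FinitelyAdditive.eq_sum_cyl {μ : Set Omega → ℂ} (hμ : FinitelyAdditive μ) {n : ℕ}
    (hn : 1 ≤ n) {s : Set Omega} (hs : DependsOnFirst n s) :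
    μ s = ∑ p ∈ nodesIn n s, μ (Cyl p.1) := by
  conv_lhs => rw [hs.eq_biUnion_cyl]
  exact addContent_biUnion_eq (m := hμ.toAddContent) isSetRing_inAlg
    (fun p _ => InAlg.basic hn p.1 p.2)
    (fun p _ q _ hpq => cyl_disjoint fun h => hpq (Subtype.ext h))

lemma IsPartition.sum_norm_le_svar {μ : Set Omega → ℂ} (hμ : FinitelyAdditive μ)
    {π : Finset (Set Omega)} (hπ : IsPartition π) {n : ℕ} (hn : 1 ≤ n)
    (hπn : ∀ s ∈ π, DependsOnFirst n s) :
    ∑ s ∈ π, ‖μ s‖ ≤ Svar μ n := by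
  have hdisj : (π : Set (Set Omega)).PairwiseDisjoint (nodesIn n) := by
    refine fun s hs t ht hst => Finset.disjoint_left.2 fun p hps hpt => ?_
    exact (hπ.2.1 hs ht hst).ne_of_mem ((mem_filter.1 hps).2 p.2.toOmega_mem_cyl)
      ((mem_filter.1 hpt).2 p.2.toOmega_mem_cyl) rfl
  calc ∑ s ∈ π, ‖μ s‖
      ≤ ∑ s ∈ π, ∑ p ∈ nodesIn n s, ‖μ (Cyl p.1)‖ := by
        refine sum_le_sum fun s hs => ?_
        rw [hμ.eq_sum_cyl hn (hπn s hs)]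
        exact norm_sum_le _ _
    _ = ∑ p ∈ π.biUnion (nodesIn n), ‖μ (Cyl p.1)‖ := (sum_biUnion hdisj).symm
    _ ≤ Svar μ n := sum_le_univ_sum_of_nonneg fun _ => norm_nonneg _

def nodeCylinders (n : ℕ) : Finset (Set Omega) :=
  univ.image fun p : {p : Fin n → Fin n → Prop // IsNode p} => Cyl p.1

lemma isPartition_nodeCylinders {n : ℕ} (hn : 1 ≤ n) : IsPartition (nodeCylinders n) := by
  refine ⟨fun s hs => ?_, fun s hs t ht hst => ?_, ?_⟩
  · obtain ⟨p, -, rfl⟩ := mem_image.1 hs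
    exact InAlg.basic hn p.1 p.2
  · obtain ⟨p, -, rfl⟩ := mem_image.1 hs
    obtain ⟨q, -, rfl⟩ := mem_image.1 ht
    exact cyl_disjoint fun h => hst (h ▸ rfl)
  · refine Set.eq_univ_of_forall fun r => Set.mem_sUnion.2 ⟨_, ?_, mem_cyl_restrict n r⟩
    exact mem_image.2 ⟨⟨_, r.isNode_restrict n⟩, mem_univ _, rfl⟩

lemma sum_norm_nodeCylinders (μ : Set Omega → ℂ) (n : ℕ) :
    ∑ s ∈ nodeCylinders n, ‖μ s‖ = Svar μ n :=
  sum_image fun _ _ _ _ h => cyl_injective n h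

/-- |μ|(Ω) = sup_{n ≥ 1} S_n, where S_n = Σ_{p an n-node} |μ(Cyl(p))|
(an equality in [0,∞], since the total variation may be infinite). -/
theorem statement_3 (μ : Set Omega → ℂ) (hμ : FinitelyAdditive μ) :
    (⨆ π : {π : Finset (Set Omega) // IsPartition π},
        ENNReal.ofReal (∑ s ∈ π.1, ‖μ s‖)) =
      ⨆ n : ℕ, ⨆ _ : 1 ≤ n, ENNReal.ofReal (Svar μ n) := by
  refine le_antisymm (iSup_le fun ⟨π, hπ⟩ => ?_) (iSup₂_le fun n hn => ?_)
  · obtain ⟨n, hn, hπn⟩ := ((eventually_ge_atTop 1).and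
      ((eventually_all_finset π).2 fun s hs => (hπ.1 s hs).eventually_dependsOnFirst)).exists
    exact le_iSup₂_of_le n hn (ENNReal.ofReal_le_ofReal (hπ.sum_norm_le_svar hμ hn hπn))
  · refine le_iSup_of_le ⟨nodeCylinders n, isPartition_nodeCylinders hn⟩ ?_
    rw [sum_norm_nodeCylinders]

end
end

section
/- For every partial order c on a finite set of cardinality n, Σ_{I an order ideal of c} λ(|I|, m(I)) = Σ_{k=0}^{n} C(n,k)·t_k = λ(n,0). -/
open MeasureTheory Filter Finset

attribute [local instance] Classical.propDecidable

noncomputable section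

/-!
Group the subsets `J` of the ground set by their downward closure. The subsets generating an
order ideal `I` are exactly those with `max I ⊆ J ⊆ I`, and summing `t_{|J|}` over this interval
of the Boolean lattice gives `λ(|I|, m(I))`. Hence the sum over ideals is `Σ_J t_{|J|}`, which
is `Σ_k C(n,k) t_k` after grouping by cardinality.
-/

lemma lam_eq_sum_range (t : ℕ → ℂ) {a b : ℕ} (hba : b ≤ a) :
    lam t a b = ∑ j ∈ range (a - b + 1), ((a - b).choose j : ℂ) * t (b + j) := by
  rw [lam, ← Ico_add_one_right_eq_Icc, sum_Ico_eq_sum_range, Nat.sub_add_comm hba]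
  simp only [Nat.add_sub_cancel_left]

lemma sum_Icc_apply_card_eq_lam {β : Type*} [DecidableEq β] (t : ℕ → ℂ) {M I : Finset β}
    (hMI : M ⊆ I) : ∑ J ∈ Icc M I, t #J = lam t #I #M := by
  have hdisj : ∀ S ∈ (I \ M).powerset, Disjoint M S := fun S hS =>
    disjoint_sdiff.mono_right (mem_powerset.mp hS)
  rw [Icc_eq_image_powerset hMI, sum_image, sum_congr rfl fun S hS => by
      rw [card_union_of_disjoint (hdisj S hS)],
    sum_powerset_apply_card (fun j => t (#M + j)), card_sdiff_of_subset hMI,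
    lam_eq_sum_range t (card_le_card hMI)]
  · simp only [nsmul_eq_mul]
  · intro S hS S' hS' h
    rw [← union_sdiff_cancel_left (hdisj S hS), ← union_sdiff_cancel_left (hdisj S' hS')]
    exact congrArg (· \ M) h

def downClosure {n : ℕ} (c : Fin n → Fin n → Prop) (J : Finset (Fin n)) : Finset (Fin n) :=
  univ.filter fun i => i ∈ J ∨ ∃ j ∈ J, c i j

section StrictOrder

variable {n : ℕ} {c : Fin n → Fin n → Prop}

lemma isIdeal_downClosure (htrans : ∀ i j k, c i j → c j k → c i k) (J : Finset (Fin n)) :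
    isIdeal c (downClosure c J) := by
  intro j hj i hij
  simp only [downClosure, mem_filter, mem_univ, true_and] at hj ⊢
  rcases hj with hj | ⟨k, hk, hjk⟩
  · exact Or.inr ⟨j, hj, hij⟩
  · exact Or.inr ⟨k, hk, htrans _ _ _ hij hjk⟩

lemma exists_maxIn_of_mem (hirr : ∀ i, ¬ c i i) (htrans : ∀ i j k, c i j → c j k → c i k)
    {I : Finset (Fin n)} {i : Fin n} (hi : i ∈ I) : ∃ m ∈ maxIn c I, i = m ∨ c i m := by
  have : IsTrans (Fin n) (flip c) := ⟨fun a b d hba hdb => htrans d b a hdb hba⟩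
  have : Std.Irrefl (flip c) := ⟨hirr⟩
  obtain ⟨m, ⟨hmI, him⟩, hmax⟩ := (Finite.wellFounded_of_trans_of_irrefl (flip c)).has_min
    {m | m ∈ I ∧ (i = m ∨ c i m)} ⟨i, hi, Or.inl rfl⟩
  refine ⟨m, mem_filter.mpr ⟨hmI, fun j hj hmj => hmax j ⟨hj, Or.inr ?_⟩ hmj⟩, him⟩
  rcases him with rfl | him
  · exact hmj
  · exact htrans _ _ _ him hmj

lemma downClosure_eq_iff (hirr : ∀ i, ¬ c i i) (htrans : ∀ i j k, c i j → c j k → c i k)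
    {I J : Finset (Fin n)} (hI : isIdeal c I) :
    downClosure c J = I ↔ J ∈ Icc (maxIn c I) I := by
  simp only [mem_Icc]
  constructor
  · rintro rfl
    refine ⟨fun m hm => ?_, fun j hj => mem_filter.mpr ⟨mem_univ j, Or.inl hj⟩⟩
    obtain ⟨hmJ, hmax⟩ := mem_filter.mp hm
    rcases (mem_filter.mp hmJ).2 with hmJ | ⟨j, hj, hmj⟩
    · exact hmJ
    · exact absurd hmj (hmax j (mem_filter.mpr ⟨mem_univ j, Or.inl hj⟩))
  · rintro ⟨hMJ, hJI⟩
    ext i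
    simp only [downClosure, mem_filter, mem_univ, true_and]
    constructor
    · rintro (hi | ⟨j, hj, hij⟩)
      · exact hJI hi
      · exact hI j (hJI hj) i hij
    · intro hi
      obtain ⟨m, hm, rfl | him⟩ := exists_maxIn_of_mem hirr htrans hi
      · exact Or.inl (hMJ hm)
      · exact Or.inr ⟨m, hMJ hm, him⟩

lemma lam_card_maxIn_eq_sum (hirr : ∀ i, ¬ c i i) (htrans : ∀ i j k, c i j → c j k → c i k)
    (t : ℕ → ℂ) {I : Finset (Fin n)} (hI : isIdeal c I) :
    lam t #I #(maxIn c I) = ∑ J ∈ univ.filter (fun J => downClosure c J = I), t #J := by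
  have hMI : maxIn c I ⊆ I := filter_subset _ I
  rw [← sum_Icc_apply_card_eq_lam t hMI]
  congr 1
  ext J
  simp [downClosure_eq_iff hirr htrans hI]

end StrictOrder

/-- for every (strict) partial order c on a finite set of cardinality n,
Σ_{I an order ideal of c} λ(|I|, m(I)) = Σ_{k=0}^{n} C(n,k)·t_k = λ(n,0). -/
theorem statement_5 (t : ℕ → ℂ) (n : ℕ) (c : Fin n → Fin n → Prop)
    (hirr : ∀ i, ¬ c i i) (htrans : ∀ i j k, c i j → c j k → c i k) :
    (∑ I ∈ Finset.univ.filter (fun I : Finset (Fin n) => isIdeal c I),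
        lam t I.card (maxIn c I).card)
      = ∑ k ∈ Finset.range (n + 1), (n.choose k : ℂ) * t k ∧
    (∑ k ∈ Finset.range (n + 1), (n.choose k : ℂ) * t k) = lam t n 0 := by
  refine ⟨?_, by simp [lam_eq_sum_range t n.zero_le]⟩
  calc ∑ I ∈ univ.filter (isIdeal c), lam t #I #(maxIn c I)
      = ∑ I ∈ univ.filter (isIdeal c),
          ∑ J ∈ univ.filter (fun J => downClosure c J = I), t #J :=
        sum_congr rfl fun I hI => lam_card_maxIn_eq_sum hirr htrans t (mem_filter.mp hI).2
    _ = ∑ J : Finset (Fin n), t #J :=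
        sum_fiberwise_of_maps_to (g := downClosure c)
          (fun J _ => mem_filter.mpr ⟨mem_univ _, isIdeal_downClosure htrans J⟩) _
    _ = ∑ k ∈ range (n + 1), (n.choose k : ℂ) * t k := by
        rw [← powerset_univ, sum_powerset_apply_card, card_univ, Fintype.card_fin]
        simp only [nsmul_eq_mul]
end
end

section
/- For every partial order c on a finite set of cardinality n, Q(c) ≥ |t_0| + Σ_{ϖ=1}^{n} |λ(ϖ,1)|, and the n-element chain (total order) attains this bound. Consequently, if λ(n,0) ≠ 0, then the minimum of ζ(c) over all partial orders c on a set of cardinality n equals ζ_n^c, the value at the n-element chain. -/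
open MeasureTheory Filter Finset

attribute [local instance] Classical.propDecidable

noncomputable section

/-!
Pascal's rule `λ(a+1, b) = λ(a, b) + λ(a+1, b+1)` and the triangle inequality bound
`|λ(|I|, |S|)|`, for an order ideal `I` and a nonempty set `S` of its maximal elements, by the sum
of `|λ(|J|, m(J))|` over the ideals `S ⊆ J ⊆ I`: choose a maximal `y ∉ S` and split these ideals
according to whether they contain `y`. Peeling maximal elements off the whole set one at a time,
the ideals containing the removed element `y` of an ideal of size `k` contribute at least
`|λ(k, 1)|`, which gives the lower bound. For the chain the order ideals are exactly the initial
segments, each nonempty one with a single maximal element, so the bound is attained.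
-/

theorem lam_add_eq_sum_range (t : ℕ → ℂ) (b d : ℕ) :
    lam t (b + d) b = ∑ j ∈ range (d + 1), (d.choose j : ℂ) * t (b + j) := by
  rw [lam, ← Ico_add_one_right_eq_Icc, sum_Ico_eq_sum_range, show b + d + 1 - b = d + 1 by omega]
  simp only [Nat.add_sub_cancel_left]

theorem lam_zero_zero (t : ℕ → ℂ) : lam t 0 0 = t 0 := by
  simp [lam]

theorem lam_succ_left (t : ℕ → ℂ) {a b : ℕ} (h : b ≤ a) :
    lam t (a + 1) b = lam t a b + lam t (a + 1) (b + 1) := by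
  obtain ⟨d, rfl⟩ := Nat.exists_eq_add_of_le h
  have hshift : ∑ j ∈ range (d + 1), (d.choose j : ℂ) * t (b + j) =
      ∑ j ∈ range (d + 1), (d.choose (j + 1) : ℂ) * t (b + (j + 1)) + t b := by
    rw [sum_range_succ', sum_range_succ _ d]
    simp
  rw [show b + d + 1 = b + (d + 1) by ring, lam_add_eq_sum_range, lam_add_eq_sum_range,
    show b + (d + 1) = b + 1 + d by ring, lam_add_eq_sum_range, sum_range_succ', hshift]
  simp only [Nat.choose_succ_succ', Nat.cast_add, add_mul, sum_add_distrib,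
    show ∀ j, b + 1 + j = b + (j + 1) by omega]
  simp only [Nat.choose_zero_right, Nat.cast_one, one_mul, add_zero]
  ring

section OrderIdeal

variable {n : ℕ} {c : Fin n → Fin n → Prop}

theorem mem_maxIn {I : Finset (Fin n)} {x : Fin n} :
    x ∈ maxIn c I ↔ x ∈ I ∧ ∀ j ∈ I, ¬ c x j := mem_filter

theorem maxIn_subset (I : Finset (Fin n)) : maxIn c I ⊆ I := filter_subset _ _

theorem maxIn_empty : maxIn c (∅ : Finset (Fin n)) = ∅ :=
  subset_empty.1 (maxIn_subset ∅)

theorem exists_mem_maxIn_of_mem [IsStrictOrder (Fin n) c] {I : Finset (Fin n)} {x : Fin n}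
    (hx : x ∈ I) : ∃ y ∈ maxIn c I, x = y ∨ c x y := by
  obtain ⟨y, ⟨hyI, hxy⟩, hmin⟩ := (Finite.wellFounded_of_trans_of_irrefl (Function.swap c)).has_min
    {z | z ∈ I ∧ (x = z ∨ c x z)} ⟨x, hx, Or.inl rfl⟩
  refine ⟨y, mem_maxIn.2 ⟨hyI, fun j hj hyj => hmin j ⟨hj, ?_⟩ hyj⟩, hxy⟩
  rcases hxy with rfl | hxy
  exacts [Or.inr hyj, Or.inr (_root_.trans hxy hyj)]

theorem maxIn_nonempty [IsStrictOrder (Fin n) c] {I : Finset (Fin n)} (hI : I.Nonempty) :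
    (maxIn c I).Nonempty :=
  let ⟨_, hx⟩ := hI
  let ⟨y, hy, _⟩ := exists_mem_maxIn_of_mem (c := c) hx
  ⟨y, hy⟩

theorem eq_of_maxIn_subset [IsStrictOrder (Fin n) c] {I J : Finset (Fin n)} (hJ : isIdeal c J)
    (hJI : J ⊆ I) (hmax : maxIn c I ⊆ J) : J = I := by
  refine hJI.antisymm fun x hx => ?_
  obtain ⟨y, hy, rfl | hxy⟩ := exists_mem_maxIn_of_mem (c := c) hx
  exacts [hmax hy, hJ y (hmax hy) x hxy]

theorem isIdeal_erase {I : Finset (Fin n)} (hI : isIdeal c I) {y : Fin n} (hy : y ∈ maxIn c I) :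
    isIdeal c (I.erase y) := by
  intro j hj i hij
  refine mem_erase.2 ⟨?_, hI j (mem_of_mem_erase hj) i hij⟩
  rintro rfl
  exact (mem_maxIn.1 hy).2 j (mem_of_mem_erase hj) hij

theorem erase_maxIn_subset (I : Finset (Fin n)) (y : Fin n) :
    (maxIn c I).erase y ⊆ maxIn c (I.erase y) := by
  intro x hx
  obtain ⟨hxy, hx⟩ := mem_erase.1 hx
  rw [mem_maxIn] at hx ⊢
  exact ⟨mem_erase.2 ⟨hxy, hx.1⟩, fun j hj => hx.2 j (mem_of_mem_erase hj)⟩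

def QvalBetween (t : ℕ → ℂ) (c : Fin n → Fin n → Prop) (S I : Finset (Fin n)) : ℝ :=
  ∑ J ∈ univ.filter (fun J => isIdeal c J ∧ S ⊆ J ∧ J ⊆ I), ‖lam t J.card (maxIn c J).card‖

theorem Qval_eq_QvalBetween (t : ℕ → ℂ) (c : Fin n → Fin n → Prop) :
    Qval t c = QvalBetween t c ∅ univ := by
  simp [Qval, QvalBetween]

theorem QvalBetween_eq_insert_add_erase (t : ℕ → ℂ) (c : Fin n → Fin n → Prop)
    (S I : Finset (Fin n)) (y : Fin n) :
    QvalBetween t c S I = QvalBetween t c (insert y S) I + QvalBetween t c S (I.erase y) := by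
  rw [QvalBetween, ← sum_filter_add_sum_filter_not _ (fun J => y ∈ J)]
  congr 2 <;> ext J <;> simp only [mem_filter, mem_univ, true_and, insert_subset_iff,
    subset_erase] <;> tauto

theorem QvalBetween_maxIn_self [IsStrictOrder (Fin n) c] (t : ℕ → ℂ) {I : Finset (Fin n)}
    (hI : isIdeal c I) : QvalBetween t c (maxIn c I) I = ‖lam t I.card (maxIn c I).card‖ := by
  have : univ.filter (fun J => isIdeal c J ∧ maxIn c I ⊆ J ∧ J ⊆ I) = {I} := by
    ext J
    simp only [mem_filter, mem_univ, true_and, mem_singleton]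
    constructor
    · rintro ⟨hJ, hmax, hJI⟩
      exact eq_of_maxIn_subset hJ hJI hmax
    · rintro rfl
      exact ⟨hI, maxIn_subset J, subset_rfl⟩
  rw [QvalBetween, this, sum_singleton]

theorem norm_lam_le_QvalBetween [IsStrictOrder (Fin n) c] (t : ℕ → ℂ) {I S : Finset (Fin n)}
    (hI : isIdeal c I) (hS : S ⊆ maxIn c I) (hSne : S.Nonempty) :
    ‖lam t I.card S.card‖ ≤ QvalBetween t c S I := by
  by_cases hfull : maxIn c I ⊆ S
  · rw [hS.antisymm hfull, QvalBetween_maxIn_self t hI]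
  obtain ⟨y, hyM, hyS⟩ := not_subset.1 hfull
  have hcard : (I.erase y).card + 1 = I.card := card_erase_add_one (maxIn_subset I hyM)
  have hSy : (insert y S).card = S.card + 1 := card_insert_of_notMem hyS
  have hSer : S ⊆ maxIn c (I.erase y) :=
    (subset_erase.2 ⟨hS, hyS⟩).trans (erase_maxIn_subset I y)
  have hSI : S.card ≤ (I.erase y).card := card_le_card (hSer.trans (maxIn_subset _))
  have hkeep := norm_lam_le_QvalBetween t hI (insert_subset hyM hS) (insert_nonempty y S)
  have hdrop := norm_lam_le_QvalBetween t (isIdeal_erase hI hyM) hSer hSne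
  rw [hSy] at hkeep
  calc ‖lam t I.card S.card‖
      = ‖lam t (I.erase y).card S.card + lam t I.card (S.card + 1)‖ := by
        rw [← hcard, lam_succ_left t hSI]
    _ ≤ ‖lam t (I.erase y).card S.card‖ + ‖lam t I.card (S.card + 1)‖ := norm_add_le _ _
    _ ≤ QvalBetween t c S (I.erase y) + QvalBetween t c (insert y S) I := add_le_add hdrop hkeep
    _ = QvalBetween t c S I := by rw [QvalBetween_eq_insert_add_erase t c S I y, add_comm]
termination_by I.card - S.card
decreasing_by all_goals omega

def QvalChain (t : ℕ → ℂ) (k : ℕ) : ℝ :=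
  ‖t 0‖ + ∑ w ∈ Icc 1 k, ‖lam t w 1‖

theorem QvalChain_succ (t : ℕ → ℂ) (k : ℕ) :
    QvalChain t (k + 1) = QvalChain t k + ‖lam t (k + 1) 1‖ := by
  rw [QvalChain, QvalChain, sum_Icc_succ_top (by omega), add_assoc]

theorem QvalChain_le_QvalBetween [IsStrictOrder (Fin n) c] (t : ℕ → ℂ) {K : Finset (Fin n)}
    (hK : isIdeal c K) : QvalChain t K.card ≤ QvalBetween t c ∅ K := by
  obtain rfl | hKne := K.eq_empty_or_nonempty
  · have := QvalBetween_maxIn_self t hK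
    rw [maxIn_empty] at this
    simp [this, QvalChain, lam_zero_zero]
  obtain ⟨y, hyM⟩ := maxIn_nonempty (c := c) hKne
  have hcard : (K.erase y).card + 1 = K.card := card_erase_add_one (maxIn_subset K hyM)
  have hlast := norm_lam_le_QvalBetween t hK (singleton_subset_iff.2 hyM) (singleton_nonempty y)
  have hrest := QvalChain_le_QvalBetween t (isIdeal_erase hK hyM)
  rw [card_singleton] at hlast
  rw [QvalBetween_eq_insert_add_erase t c ∅ K y, insert_empty, ← hcard, QvalChain_succ, hcard]
  linarith
termination_by K.card
decreasing_by omega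

theorem QvalChain_le_Qval [IsStrictOrder (Fin n) c] (t : ℕ → ℂ) : QvalChain t n ≤ Qval t c := by
  simpa [Qval_eq_QvalBetween] using
    QvalChain_le_QvalBetween (c := c) t (K := univ) (by simp [isIdeal])

def initialSegment (n k : ℕ) : Finset (Fin n) := univ.filter fun i => (i : ℕ) < k

theorem card_initialSegment {n k : ℕ} (hk : k ≤ n) : (initialSegment n k).card = k := by
  rw [initialSegment, Fin.card_filter_val_lt, min_eq_right hk]

theorem isIdeal_initialSegment (n k : ℕ) :
    isIdeal (fun i j : Fin n => (i : ℕ) < (j : ℕ)) (initialSegment n k) := by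
  intro j hj i hij
  simp only [initialSegment, mem_filter, mem_univ, true_and] at hj ⊢
  omega

theorem eq_initialSegment_card {I : Finset (Fin n)}
    (hI : isIdeal (fun i j : Fin n => (i : ℕ) < (j : ℕ)) I) : I = initialSegment n I.card := by
  have hsub : I ⊆ initialSegment n I.card := by
    intro i hi
    have hbelow : initialSegment n (i + 1) ⊆ I := by
      intro j hj
      simp only [initialSegment, mem_filter, mem_univ, true_and] at hj
      obtain hji | hji := Nat.lt_succ_iff_lt_or_eq.1 hj
      · exact hI i hi j hji
      · rwa [Fin.ext hji]
    have := card_le_card hbelow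
    rw [card_initialSegment i.2] at this
    simp only [initialSegment, mem_filter, mem_univ, true_and]
    omega
  refine eq_of_subset_of_card_le hsub (card_initialSegment ?_).le
  simpa using card_le_univ I

theorem card_maxIn_initialSegment {n k : ℕ} (hk0 : 0 < k) (hkn : k ≤ n) :
    (maxIn (fun i j : Fin n => (i : ℕ) < (j : ℕ)) (initialSegment n k)).card = 1 := by
  refine card_eq_one.2 ⟨⟨k - 1, by omega⟩, ?_⟩
  ext i
  simp only [maxIn, initialSegment, mem_filter, mem_univ, true_and, mem_singleton, Fin.ext_iff]
  constructor
  · rintro ⟨hik, hmax⟩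
    have := hmax ⟨k - 1, by omega⟩ (by simp only; omega)
    simp only at this
    omega
  · intro hi
    exact ⟨by omega, fun j hj => by omega⟩

theorem Qval_chain (t : ℕ → ℂ) (n : ℕ) :
    Qval t (fun i j : Fin n => (i : ℕ) < (j : ℕ)) = QvalChain t n := by
  have hsum : Qval t (fun i j : Fin n => (i : ℕ) < (j : ℕ)) = ∑ k ∈ range (n + 1),
      ‖lam t k (maxIn (fun i j : Fin n => (i : ℕ) < (j : ℕ)) (initialSegment n k)).card‖ := by
    refine sum_nbij' card (initialSegment n) (fun I _ => ?_) (fun k _ => ?_) (fun I hI => ?_)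
      (fun k hk => ?_) (fun I hI => ?_)
    · simpa [Nat.lt_succ_iff] using card_le_univ I
    · simpa using isIdeal_initialSegment n k
    · exact (eq_initialSegment_card (mem_filter.1 hI).2).symm
    · exact card_initialSegment (Nat.lt_succ_iff.1 (mem_range.1 hk))
    · rw [← eq_initialSegment_card (mem_filter.1 hI).2]
  rw [hsum, range_eq_Ico, sum_eq_sum_Ico_succ_bot (by omega), zero_add,
    Ico_add_one_right_eq_Icc, QvalChain]
  congr 1
  · have hempty : initialSegment n 0 = ∅ := by simp [initialSegment]
    rw [hempty, maxIn_empty, card_empty, lam_zero_zero]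
  · refine sum_congr rfl fun k hk => ?_
    rw [card_maxIn_initialSegment (mem_Icc.1 hk).1 (mem_Icc.1 hk).2]

end OrderIdeal

/-- Q(c) ≥ |t_0| + Σ_{ϖ=1}^{n} |λ(ϖ,1)| for every (strict) partial order c
on a set of cardinality n, the n-chain attains the bound, and hence if λ(n,0) ≠ 0 the
minimum of ζ(c) over all such partial orders is ζ_n^c, attained at the chain. -/
theorem statement_7 (t : ℕ → ℂ) (n : ℕ) :
    (∀ c : Fin n → Fin n → Prop, (∀ i, ¬ c i i) → (∀ i j k, c i j → c j k → c i k) →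
      ‖t 0‖ + ∑ w ∈ Finset.Icc 1 n, ‖lam t w 1‖ ≤ Qval t c) ∧
    Qval t (fun i j : Fin n => (i : ℕ) < (j : ℕ))
      = ‖t 0‖ + ∑ w ∈ Finset.Icc 1 n, ‖lam t w 1‖ ∧
    (lam t n 0 ≠ 0 →
      IsLeast {x : ℝ | ∃ c : Fin n → Fin n → Prop,
          (∀ i, ¬ c i i) ∧ (∀ i j k, c i j → c j k → c i k) ∧ x = zeta t c}
        (zetaC t n)) := by
  have hlower (c : Fin n → Fin n → Prop) (hirr : ∀ i, ¬ c i i)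
      (htr : ∀ i j k, c i j → c j k → c i k) : QvalChain t n ≤ Qval t c :=
    haveI : IsStrictOrder (Fin n) c := { irrefl := hirr, trans := htr }
    QvalChain_le_Qval t
  refine ⟨hlower, Qval_chain t n, fun h0 => ⟨?_, ?_⟩⟩
  · exact ⟨fun i j => (i : ℕ) < (j : ℕ), fun i => lt_irrefl _, fun i j k => lt_trans,
      by rw [zeta, Qval_chain]; rfl⟩
  · rintro x ⟨c, hirr, htr, rfl⟩
    have := norm_pos_iff.2 h0
    rw [zeta, zetaC]
    gcongr
    exact hlower c hirr htr

end
end
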